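/- Let n ∈ ℕ and let f ∈ S_n be an odd function, with Taylor expansion f(z) = z + Σ_{k≥1} a_{2k+1} z^{2k+1}. Then for every positive integer k, |a_{2k+1}| ≤ (2k+1)^{−n}. -/

import Mathlib

/-!
Put `b m = m ^ n * a m`, so that `Dn = ∑ b m z ^ m` and `Dn1 = ∑ m b m z ^ m`. Dividing both
by `z` shows that `Q = Dn1 / Dn` extends holomorphically to the disc with `Q 0 = 1` and
`Re Q ≥ 0`, so by Carathéodory's lemma its Taylor coefficients satisfy `‖q m‖ ≤ 2` for `m ≥ 1`.
Comparing coefficients in `Dn1 = Q * Dn` gives `(m - 1) b m = ∑_{i = 1}^{m - 1} q i * b (m - i)`.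
Oddness kills the even `b`'s, so for `m = 2j + 1` only the `j` odd indices below `m` contribute,
and induction gives `‖b (2j + 1)‖ ≤ 1`.

Carathéodory's lemma is proved with Herglotz's trick: on the circle `|z| = r` the mean of
`z⁻ᵐ * conj Q` vanishes for `m ≥ 1`, so `q m` is the mean of `z⁻ᵐ * 2 Re Q`, whose norm is at
most `2 r⁻ᵐ` times the mean of `Re Q`, which is `Re Q 0`.
-/

open Metric Finset Real
open scoped Nat ENNReal ComplexConjugate

def HasPowerSeriesOnUnitDisc (F : ℂ → ℂ) (c : ℕ → ℂ) : Prop :=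
  ∀ z ∈ ball (0 : ℂ) 1, HasSum (fun m => c m * z ^ m) (F z)

namespace HasPowerSeriesOnUnitDisc

variable {F G : ℂ → ℂ} {c d : ℕ → ℂ}

theorem one_le_radius (hF : HasPowerSeriesOnUnitDisc F c) :
    1 ≤ (FormalMultilinearSeries.ofScalars ℂ c).radius := by
  refine ENNReal.le_of_forall_nnreal_lt fun r hr => ?_
  have hr' : ((r : ℝ) : ℂ) ∈ ball (0 : ℂ) 1 := by simpa using hr
  refine FormalMultilinearSeries.le_radius_of_tendsto _ (l := 0) ?_
  simpa [FormalMultilinearSeries.ofScalars_norm] using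
    (hF _ hr').summable.tendsto_atTop_zero.norm

theorem hasFPowerSeriesOnBall (hF : HasPowerSeriesOnUnitDisc F c) :
    HasFPowerSeriesOnBall F (FormalMultilinearSeries.ofScalars ℂ c) 0 1 where
  r_le := hF.one_le_radius
  r_pos := one_pos
  hasSum {y} hy := by
    rw [← ENNReal.coe_one, eball_coe, NNReal.coe_one] at hy
    simpa [FormalMultilinearSeries.ofScalars_apply_eq, mul_comm] using hF y hy

theorem differentiableOn (hF : HasPowerSeriesOnUnitDisc F c) :
    DifferentiableOn ℂ F (ball 0 1) := by
  simpa [← ENNReal.coe_one, eball_coe] using hF.hasFPowerSeriesOnBall.differentiableOn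

theorem unique (hc : HasPowerSeriesOnUnitDisc F c) (hd : HasPowerSeriesOnUnitDisc F d) :
    c = d :=
  FormalMultilinearSeries.ofScalars_series_injective ℂ ℂ <|
    hc.hasFPowerSeriesOnBall.hasFPowerSeriesAt.eq_formalMultilinearSeries
      hd.hasFPowerSeriesOnBall.hasFPowerSeriesAt

theorem apply_zero (hF : HasPowerSeriesOnUnitDisc F c) : F 0 = c 0 := by
  have h := hasSum_single (f := fun m => c m * (0 : ℂ) ^ m) 0 fun m hm => by simp [hm]
  simpa using (hF 0 (mem_ball_self one_pos)).unique h

theorem summable_norm (hF : HasPowerSeriesOnUnitDisc F c) {z : ℂ} (hz : z ∈ ball 0 1) :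
    Summable fun m => ‖c m * z ^ m‖ := by
  have hz' : ‖z‖₊ < 1 := by simpa [← NNReal.coe_lt_coe] using hz
  have hlt : (‖z‖₊ : ℝ≥0∞) < (FormalMultilinearSeries.ofScalars ℂ c).radius :=
    lt_of_lt_of_le (by exact_mod_cast hz') hF.one_le_radius
  have := (FormalMultilinearSeries.ofScalars ℂ c).summable_norm_mul_pow hlt
  simp only [FormalMultilinearSeries.ofScalars_norm, coe_nnnorm] at this
  simpa only [norm_mul, norm_pow] using this

theorem mul (hF : HasPowerSeriesOnUnitDisc F c) (hG : HasPowerSeriesOnUnitDisc G d) :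
    HasPowerSeriesOnUnitDisc (F * G) fun m => ∑ kl ∈ antidiagonal m, c kl.1 * d kl.2 := by
  intro z hz
  have hc := hF.summable_norm hz
  have hd := hG.summable_norm hz
  have hcd := (summable_norm_sum_mul_antidiagonal_of_summable_norm hc hd).of_norm.hasSum
  rw [← tsum_mul_tsum_eq_tsum_sum_antidiagonal_of_summable_norm hc hd,
    (hF z hz).tsum_eq, (hG z hz).tsum_eq] at hcd
  refine hcd.congr_fun fun m => ?_
  rw [Finset.sum_mul]
  refine sum_congr rfl fun kl hkl => ?_
  rw [← mem_antidiagonal.mp hkl, pow_add]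
  ring

theorem coeff_eq_zero_of_even (hF : HasPowerSeriesOnUnitDisc F c)
    (hodd : ∀ z ∈ ball (0 : ℂ) 1, F (-z) = -F z) {m : ℕ} (hm : Even m) : c m = 0 := by
  have hneg : HasPowerSeriesOnUnitDisc (fun z => -F z) fun m => (-1) ^ m * c m := by
    intro z hz
    simp only [← hodd z hz]
    exact (hF (-z) (by simpa using hz)).congr_fun fun m => by rw [neg_pow]; ring
  have hneg' : HasPowerSeriesOnUnitDisc (fun z => -F z) fun m => -c m := fun z hz => by
    simpa only [neg_mul] using (hF z hz).neg
  have h := congrFun (hneg.unique hneg') m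
  rw [hm.neg_one_pow, one_mul] at h
  exact CharZero.eq_neg_self_iff.mp h

theorem exists_shift (hF : HasPowerSeriesOnUnitDisc F c) :
    ∃ G, HasPowerSeriesOnUnitDisc G (fun m => c (m + 1)) ∧
      ∀ z ∈ ball (0 : ℂ) 1, F z = c 0 + z * G z := by
  have hshift : ∀ z ∈ ball (0 : ℂ) 1,
      HasSum (fun m => z * (c (m + 1) * z ^ m)) (F z - c 0) := fun z hz => by
    have h := (hasSum_nat_add_iff' 1).mpr (hF z hz)
    simp only [range_one, sum_singleton, pow_zero, mul_one] at h
    exact h.congr_fun fun m => by ring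
  have hsum : HasPowerSeriesOnUnitDisc (fun z => ∑' m, c (m + 1) * z ^ m) fun m => c (m + 1) := by
    intro z hz
    refine Summable.hasSum ?_
    rcases eq_or_ne z 0 with rfl | hz0
    · exact (hasSum_single 0 fun m hm => by simp [hm]).summable
    · simpa [← mul_assoc, hz0] using (hshift z hz).summable.mul_left z⁻¹
  refine ⟨_, hsum, fun z hz => ?_⟩
  rw [← tsum_mul_left, (hshift z hz).tsum_eq]
  ring

end HasPowerSeriesOnUnitDisc

theorem DifferentiableOn.hasPowerSeriesOnUnitDisc {P : ℂ → ℂ}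
    (hP : DifferentiableOn ℂ P (ball 0 1)) :
    HasPowerSeriesOnUnitDisc P fun m => (m ! : ℂ)⁻¹ * iteratedDeriv m P 0 := fun z hz =>
  (Complex.hasSum_taylorSeries_on_ball hP hz).congr_fun fun m => by
    simp only [sub_zero, smul_eq_mul]
    ring

theorem norm_circleAverage_le {E : Type*} [NormedAddCommGroup E] [NormedSpace ℝ E] {f : ℂ → E}
    {c : ℂ} {R : ℝ} : ‖circleAverage f c R‖ ≤ circleAverage (fun z => ‖f z‖) c R := by
  rw [circleAverage_def, circleAverage_def, norm_smul, smul_eq_mul, norm_inv,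
    Real.norm_of_nonneg two_pi_pos.le]
  gcongr
  exact intervalIntegral.norm_integral_le_integral_norm two_pi_pos.le

section Caratheodory

variable {P : ℂ → ℂ} {r : ℝ} {m : ℕ}

theorem circleAverage_inv_pow_mul_eq (hr : 0 < r) (hP : DifferentiableOn ℂ P (closedBall 0 r)) :
    circleAverage (fun z => (z ^ m)⁻¹ * P z) 0 r = (m ! : ℂ)⁻¹ * iteratedDeriv m P 0 := by
  have hcauchy := hP.circleIntegral_one_div_sub_center_pow_smul hr m
  rw [circleAverage_eq_circleIntegral hr.ne']
  simp only [sub_zero, smul_eq_mul] at hcauchy ⊢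
  rw [circleIntegral.integral_congr hr.le fun z hz => show z⁻¹ * ((z ^ m)⁻¹ * P z) =
      1 / z ^ (m + 1) * P z by rw [pow_succ]; field_simp, hcauchy]
  field_simp [Complex.I_ne_zero, Real.pi_ne_zero]

theorem circleAverage_inv_pow_mul_conj_eq_zero (hr : 0 < r)
    (hP : DifferentiableOn ℂ P (closedBall 0 r)) (hm : m ≠ 0) :
    circleAverage (fun z => (z ^ m)⁻¹ * conj (P z)) 0 r = 0 := by
  have hmean : circleAverage (fun z => z ^ m * P z) 0 r = 0 := by
    rw [DiffContOnCl.circleAverage]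
    · simp [hm]
    · rw [abs_of_pos hr]
      exact ((differentiable_pow m).differentiableOn.mul hP).diffContOnCl_ball subset_rfl
  have hint : CircleIntegrable (fun z => z ^ m * P z) 0 r :=
    ((continuousOn_pow m).mul (hP.continuousOn.mono sphere_subset_closedBall)).circleIntegrable
      hr.le
  have hconj : circleAverage (fun z => conj (z ^ m * P z)) 0 r = 0 := by
    have h := (Complex.conjCLE : ℂ →L[ℝ] ℂ).circleAverage_comp_comm hint
    rw [hmean, map_zero] at h
    exact h
  have hsphere : Set.EqOn (fun z => (z ^ m)⁻¹ * conj (P z))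
      (fun z => ((r : ℂ) ^ (2 * m))⁻¹ * conj (z ^ m * P z)) (sphere 0 |r|) := by
    intro z hz
    have hz' : ‖z‖ = r := by simpa [abs_of_pos hr] using hz
    have hz0 : z ≠ 0 := by rintro rfl; simp at hz'; linarith
    have hconjz : conj z = (r : ℂ) ^ 2 / z := by
      rw [eq_div_iff hz0, mul_comm, Complex.mul_conj', hz']
    have hr0 : (r : ℂ) ≠ 0 := by exact_mod_cast hr.ne'
    simp only [map_mul, map_pow, hconjz, div_pow, ← pow_mul]
    field_simp
  rw [circleAverage_congr_sphere hsphere]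
  exact (circleAverage_fun_smul (a := ((r : ℂ) ^ (2 * m))⁻¹)).trans (by rw [hconj, smul_zero])

theorem taylorCoeff_eq_circleAverage_re (hr : 0 < r)
    (hP : DifferentiableOn ℂ P (closedBall 0 r)) (hm : m ≠ 0) :
    (m ! : ℂ)⁻¹ * iteratedDeriv m P 0 =
      circleAverage (fun z => (z ^ m)⁻¹ * ((2 * (P z).re : ℝ) : ℂ)) 0 r := by
  have hcont : ContinuousOn P (sphere 0 r) := hP.continuousOn.mono sphere_subset_closedBall
  have hinv : ContinuousOn (fun z : ℂ => (z ^ m)⁻¹) (sphere 0 r) :=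
    (continuousOn_pow m).inv₀ fun z hz => pow_ne_zero m (ne_zero_of_mem_sphere hr.ne' ⟨z, hz⟩)
  have h := circleAverage_fun_add (f₁ := fun z => (z ^ m)⁻¹ * P z)
    (f₂ := fun z => (z ^ m)⁻¹ * conj (P z)) ((hinv.mul hcont).circleIntegrable hr.le)
    ((hinv.mul (Complex.continuous_conj.comp_continuousOn hcont)).circleIntegrable hr.le)
  rw [circleAverage_inv_pow_mul_conj_eq_zero hr hP hm, add_zero,
    circleAverage_inv_pow_mul_eq hr hP] at h
  simpa only [← mul_add, Complex.add_conj] using h.symm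

theorem norm_taylorCoeff_mul_pow_le (hr : 0 < r) (hP : DifferentiableOn ℂ P (closedBall 0 r))
    (hre : ∀ z ∈ sphere (0 : ℂ) r, 0 ≤ (P z).re) (hm : m ≠ 0) :
    ‖(m ! : ℂ)⁻¹ * iteratedDeriv m P 0‖ * r ^ m ≤ 2 * (P 0).re := by
  have hnorm : Set.EqOn (fun z => ‖(z ^ m)⁻¹ * ((2 * (P z).re : ℝ) : ℂ)‖)
      (fun z => (r ^ m)⁻¹ * 2 * (P z).re) (sphere 0 |r|) := by
    intro z hz
    rw [abs_of_pos hr] at hz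
    have hz' : ‖z‖ = r := by simpa using hz
    dsimp only
    rw [norm_mul, norm_inv, norm_pow, hz', Complex.norm_real,
      Real.norm_of_nonneg (by linarith [hre z hz])]
    ring
  have hmean : circleAverage (fun z => (P z).re) 0 r = (P 0).re := by
    have h := Complex.reCLM.circleAverage_comp_comm
      ((hP.continuousOn.mono sphere_subset_closedBall).circleIntegrable hr.le)
    rw [DiffContOnCl.circleAverage] at h
    · exact h
    · rw [abs_of_pos hr]
      exact hP.diffContOnCl_ball subset_rfl
  calc ‖(m ! : ℂ)⁻¹ * iteratedDeriv m P 0‖ * r ^ m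
      ≤ circleAverage (fun z => (r ^ m)⁻¹ * 2 * (P z).re) 0 r * r ^ m := by
        rw [taylorCoeff_eq_circleAverage_re hr hP hm, ← circleAverage_congr_sphere hnorm]
        gcongr
        exact norm_circleAverage_le
    _ = 2 * (P 0).re := by
        rw [show circleAverage (fun z => (r ^ m)⁻¹ * 2 * (P z).re) 0 r =
          (r ^ m)⁻¹ * 2 * circleAverage (fun z => (P z).re) 0 r from
          circleAverage_fun_smul (𝕜 := ℝ) (a := (r ^ m)⁻¹ * 2) (f := fun z => (P z).re), hmean]
        field_simp

theorem HasPowerSeriesOnUnitDisc.norm_coeff_le_two_mul_re {p : ℕ → ℂ}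
    (hP : HasPowerSeriesOnUnitDisc P p) (hre : ∀ z ∈ ball (0 : ℂ) 1, 0 ≤ (P z).re)
    (hm : m ≠ 0) : ‖p m‖ ≤ 2 * (p 0).re := by
  have hdiff := hP.differentiableOn
  rw [hP.unique hdiff.hasPowerSeriesOnUnitDisc]
  have hbound : ∀ r ∈ Set.Ioo (0 : ℝ) 1,
      ‖(m ! : ℂ)⁻¹ * iteratedDeriv m P 0‖ * r ^ m ≤ 2 * (P 0).re := fun r hr =>
    norm_taylorCoeff_mul_pow_le hr.1 (hdiff.mono (closedBall_subset_ball hr.2))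
      (fun z hz => hre z (sphere_subset_closedBall.trans (closedBall_subset_ball hr.2) hz)) hm
  have hlim : Filter.Tendsto (fun r : ℝ => ‖(m ! : ℂ)⁻¹ * iteratedDeriv m P 0‖ * r ^ m)
      (nhdsWithin 1 (Set.Iio 1)) (nhds ‖(m ! : ℂ)⁻¹ * iteratedDeriv m P 0‖) := by
    refine ((continuous_const.mul (continuous_pow m)).tendsto' 1 _ ?_).mono_left
      nhdsWithin_le_nhds
    simp
  simpa using le_of_tendsto hlim (Filter.eventually_of_mem (Ioo_mem_nhdsLT one_pos) hbound)

end Caratheodory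

section CoefficientRecursion

variable {b p : ℕ → ℂ}

theorem norm_natCast_mul_coeff_succ_le (hp0 : p 0 = 1) (hp : ∀ m, m ≠ 0 → ‖p m‖ ≤ 2)
    (hrec : ∀ m : ℕ, (m : ℂ) * b m = ∑ kl ∈ antidiagonal m, p kl.1 * b kl.2) (N : ℕ) :
    N * ‖b (N + 1)‖ ≤ 2 * ∑ l ∈ range (N + 1), ‖b l‖ := by
  have hN : (N : ℂ) * b (N + 1) = ∑ kl ∈ antidiagonal N, p (kl.1 + 1) * b kl.2 := by
    have h := hrec (N + 1)
    rw [Nat.sum_antidiagonal_succ, hp0, one_mul] at h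
    push_cast at h
    linear_combination h
  calc (N : ℝ) * ‖b (N + 1)‖ = ‖∑ kl ∈ antidiagonal N, p (kl.1 + 1) * b kl.2‖ := by
        rw [← hN, norm_mul, Complex.norm_natCast]
    _ ≤ ∑ kl ∈ antidiagonal N, 2 * ‖b kl.2‖ := by
        refine (norm_sum_le _ _).trans (sum_le_sum fun kl _ => ?_)
        rw [norm_mul]
        gcongr
        exact hp _ (Nat.succ_ne_zero _)
    _ = 2 * ∑ l ∈ range (N + 1), ‖b l‖ := by
        rw [← mul_sum, ← Nat.sum_antidiagonal_swap, Nat.sum_antidiagonal_eq_sum_range_succ_mk]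
        rfl

theorem norm_coeff_odd_le_one (hb1 : b 1 = 1) (hbeven : ∀ m, Even m → b m = 0) (hp0 : p 0 = 1)
    (hp : ∀ m, m ≠ 0 → ‖p m‖ ≤ 2)
    (hrec : ∀ m : ℕ, (m : ℂ) * b m = ∑ kl ∈ antidiagonal m, p kl.1 * b kl.2) (j : ℕ) :
    ‖b (2 * j + 1)‖ ≤ 1 := by
  have hstep : ∀ j : ℕ, ∑ l ∈ range (2 * j + 1), ‖b l‖ ≤ j → ‖b (2 * j + 1)‖ ≤ 1 := by
    intro j hj
    rcases Nat.eq_zero_or_pos j with rfl | hj0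
    · simp [hb1]
    · have h := norm_natCast_mul_coeff_succ_le hp0 hp hrec (2 * j)
      push_cast at h
      have : (0 : ℝ) < j := by exact_mod_cast hj0
      nlinarith
  have hsum : ∀ j : ℕ, ∑ l ∈ range (2 * j + 1), ‖b l‖ ≤ j := by
    intro j
    induction j with
    | zero => simp [hbeven 0 ⟨0, rfl⟩]
    | succ j ih =>
      rw [show 2 * (j + 1) + 1 = 2 * j + 1 + 1 + 1 by ring, sum_range_succ, sum_range_succ,
        hbeven (2 * j + 1 + 1) (by simp [Nat.even_add_one]), norm_zero, add_zero]
      push_cast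
      linarith [hstep j ih]
  exact hstep j (hsum j)

end CoefficientRecursion

section Starlike

variable {G H : ℂ → ℂ} {b : ℕ → ℂ}

theorem exists_re_nonneg_of_re_div_pos (hG : HasPowerSeriesOnUnitDisc G b)
    (hH : HasPowerSeriesOnUnitDisc H fun m => m * b m) (hb0 : b 0 = 0) (hb1 : b 1 = 1)
    (hne : ∀ z ∈ ball (0 : ℂ) 1, z ≠ 0 → G z ≠ 0)
    (hre : ∀ z ∈ ball (0 : ℂ) 1, z ≠ 0 → 0 < (H z / G z).re) :
    ∃ Q : ℂ → ℂ, DifferentiableOn ℂ Q (ball 0 1) ∧ Q 0 = 1 ∧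
      (∀ z ∈ ball (0 : ℂ) 1, 0 ≤ (Q z).re) ∧ ∀ z ∈ ball (0 : ℂ) 1, H z = Q z * G z := by
  -- `Q = (H / z) / (G / z)`, where `G / z` does not vanish at `0` because `b 1 = 1`
  obtain ⟨G₁, hG₁, hGG₁⟩ := hG.exists_shift
  obtain ⟨H₁, hH₁, hHH₁⟩ := hH.exists_shift
  have hG₁0 : G₁ 0 = 1 := by rw [hG₁.apply_zero, hb1]
  have hH₁0 : H₁ 0 = 1 := by rw [hH₁.apply_zero, hb1]; simp
  have hG₁ne : ∀ z ∈ ball (0 : ℂ) 1, G₁ z ≠ 0 := by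
    intro z hz
    rcases eq_or_ne z 0 with rfl | hz0
    · simp [hG₁0]
    · intro h
      exact hne z hz hz0 (by rw [hGG₁ z hz, hb0, h]; ring)
  have hHG : ∀ z ∈ ball (0 : ℂ) 1, H z = H₁ z / G₁ z * G z := by
    intro z hz
    rw [hHH₁ z hz, hGG₁ z hz, hb0, Nat.cast_zero, zero_mul, zero_add, zero_add]
    field_simp [hG₁ne z hz]
  refine ⟨fun z => H₁ z / G₁ z, hH₁.differentiableOn.div hG₁.differentiableOn hG₁ne,
    by simp [hG₁0, hH₁0], fun z hz => ?_, hHG⟩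
  rcases eq_or_ne z 0 with rfl | hz0
  · simp [hG₁0, hH₁0]
  · have hQz := hre z hz hz0
    rw [hHG z hz, mul_div_cancel_right₀ _ (hne z hz hz0)] at hQz
    exact hQz.le

theorem norm_coeff_odd_le_one_of_re_div_pos (hG : HasPowerSeriesOnUnitDisc G b)
    (hH : HasPowerSeriesOnUnitDisc H fun m => m * b m) (hb1 : b 1 = 1)
    (hbeven : ∀ m, Even m → b m = 0) (hne : ∀ z ∈ ball (0 : ℂ) 1, z ≠ 0 → G z ≠ 0)
    (hre : ∀ z ∈ ball (0 : ℂ) 1, z ≠ 0 → 0 < (H z / G z).re) (j : ℕ) :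
    ‖b (2 * j + 1)‖ ≤ 1 := by
  obtain ⟨Q, hQ, hQ0, hQre, hHQG⟩ :=
    exists_re_nonneg_of_re_div_pos hG hH (hbeven 0 ⟨0, rfl⟩) hb1 hne hre
  have hq := hQ.hasPowerSeriesOnUnitDisc
  have hq0 : (0 ! : ℂ)⁻¹ * iteratedDeriv 0 Q 0 = 1 := by simp [hQ0]
  have hq2 : ∀ m, m ≠ 0 → ‖(m ! : ℂ)⁻¹ * iteratedDeriv m Q 0‖ ≤ 2 := fun m hm => by
    simpa [hQ0] using hq.norm_coeff_le_two_mul_re hQre hm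
  have hQG : HasPowerSeriesOnUnitDisc (Q * G) fun m => m * b m := fun z hz => by
    simpa only [Pi.mul_apply, ← hHQG z hz] using hH z hz
  exact norm_coeff_odd_le_one hb1 hbeven hq0 hq2 (congrFun (hQG.unique (hq.mul hG))) j

end Starlike

theorem salagean_odd_coeff_bound_general
    (n : ℕ) (f Dn Dn1 : ℂ → ℂ) (a : ℕ → ℂ)
    (ha1 : a 1 = 1)
    (hf : ∀ z ∈ Metric.ball (0 : ℂ) 1, HasSum (fun k => a k * z ^ k) (f z))
    (hodd : ∀ z ∈ Metric.ball (0 : ℂ) 1, f (-z) = -f z)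
    (hDn : ∀ z ∈ Metric.ball (0 : ℂ) 1,
      HasSum (fun k : ℕ => (k : ℂ) ^ n * a k * z ^ k) (Dn z))
    (hDn1 : ∀ z ∈ Metric.ball (0 : ℂ) 1,
      HasSum (fun k : ℕ => (k : ℂ) ^ (n + 1) * a k * z ^ k) (Dn1 z))
    (hne : ∀ z ∈ Metric.ball (0 : ℂ) 1, z ≠ 0 → Dn z ≠ 0)
    (hre : ∀ z ∈ Metric.ball (0 : ℂ) 1, z ≠ 0 → 0 < (Dn1 z / Dn z).re)
    (k : ℕ) :
    ‖a (2 * k + 1)‖ ≤ ((2 * k + 1 : ℕ) : ℝ) ^ (-(n : ℤ)) := by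
  have haeven : ∀ m, Even m → a m = 0 := fun m hm =>
    HasPowerSeriesOnUnitDisc.coeff_eq_zero_of_even hf hodd hm
  have hDn1' : HasPowerSeriesOnUnitDisc Dn1 fun m => m * (m ^ n * a m) := fun z hz =>
    (hDn1 z hz).congr_fun fun m => by ring
  have hb := norm_coeff_odd_le_one_of_re_div_pos (b := fun m => (m : ℂ) ^ n * a m) hDn hDn1'
    (by simp [ha1]) (fun m hm => by simp [haeven m hm]) hne hre k
  rw [norm_mul, norm_pow, Complex.norm_natCast] at hb
  rw [zpow_neg, zpow_natCast, ← one_div, le_div_iff₀' (by positivity)]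
  exact hb

/-- Corollary 3.4: If f ∈ Sₙ is odd, then |a_{2k+1}| ≤ (2k+1)^{−n} for every
positive integer k. -/
theorem salagean_odd_coeff_bound
    (n : ℕ) (f Dn Dn1 : ℂ → ℂ) (a : ℕ → ℂ)
    (ha0 : a 0 = 0) (ha1 : a 1 = 1)
    (hf : ∀ z ∈ Metric.ball (0 : ℂ) 1, HasSum (fun k => a k * z ^ k) (f z))
    (hodd : ∀ z ∈ Metric.ball (0 : ℂ) 1, f (-z) = -f z)
    (hDn : ∀ z ∈ Metric.ball (0 : ℂ) 1,
      HasSum (fun k : ℕ => (k : ℂ) ^ n * a k * z ^ k) (Dn z))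
    (hDn1 : ∀ z ∈ Metric.ball (0 : ℂ) 1,
      HasSum (fun k : ℕ => (k : ℂ) ^ (n + 1) * a k * z ^ k) (Dn1 z))
    (hne : ∀ z ∈ Metric.ball (0 : ℂ) 1, z ≠ 0 → Dn z ≠ 0)
    (hre : ∀ z ∈ Metric.ball (0 : ℂ) 1, z ≠ 0 → 0 < (Dn1 z / Dn z).re)
    (k : ℕ) (hk : 1 ≤ k) :
    ‖a (2 * k + 1)‖ ≤ ((2 * k + 1 : ℕ) : ℝ) ^ (-(n : ℤ)) :=
  salagean_odd_coeff_bound_general n f Dn Dn1 a ha1 hf hodd hDn hDn1 hne hre k
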